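/- arXiv:2012.01100 — 3 statements merged into one kernel-verified Lean document; each statement's English description precedes it below -/
import Mathlib

section
/- Let Q^A(a_1),...,Q^A(a_M) and Q^B(a_1),...,Q^B(a_M) be two collections of integrable random variables such that the collection Q^B is independent of the collection Q^A, and E[Q^A(a_i)] = E[Q^B(a_i)] = μ_i for all i. Let a* be a (measurably chosen) index maximizing Q^A. Then E[Q^B(a*)] ≤ max_i μ_i. -/
/-!
The chosen index `a* = g (Q^A)` is a function of `Q^A`, hence independent of `Q^B`. Splitting on
the value of `a*`, independence gives `E[Q^B(a*)] = ∑ i, P(a* = i) μ i`, a convex combination of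
the `μ i`, which is at most their maximum.
-/

open MeasureTheory ProbabilityTheory Finset

lemma integral_le_sup' {ι : Type*} [Fintype ι] [Nonempty ι] [MeasurableSpace ι]
    [MeasurableSingletonClass ι] (ν : Measure ι) [IsProbabilityMeasure ν] (f : ι → ℝ) :
    ∫ i, f i ∂ν ≤ univ.sup' univ_nonempty f := calc
  _ ≤ ∫ _, univ.sup' univ_nonempty f ∂ν :=
    integral_mono .of_finite (integrable_const _) fun i => le_sup' f (mem_univ i)
  _ = univ.sup' univ_nonempty f := by simp

section RandomIndex

variable {Ω ι : Type*} [MeasurableSpace Ω] {P : Measure Ω} [MeasurableSpace ι]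
  [MeasurableSingletonClass ι]

lemma integral_ite_eq_measureReal_map [Countable ι] [DecidableEq ι] {σ : Ω → ι}
    (hσ : AEMeasurable σ P) (i : ι) :
    ∫ ω, (if σ ω = i then (1 : ℝ) else 0) ∂P = (P.map σ).real {i} := calc
  _ = ∫ j, ({i} : Set ι).indicator 1 j ∂P.map σ := by
    rw [integral_map hσ (measurable_of_countable _).aestronglyMeasurable]
    simp only [Set.indicator_apply, Set.mem_singleton_iff, Pi.one_apply]
  _ = (P.map σ).real {i} := integral_indicator_one (measurableSet_singleton i)

theorem integral_apply_indepFun_index [Fintype ι] [IsFiniteMeasure P] {Y : ι → Ω → ℝ}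
    {σ : Ω → ι} (hσ : AEMeasurable σ P) (hY : ∀ i, Integrable (Y i) P)
    (hind : IndepFun σ (fun ω i => Y i ω) P) :
    ∫ ω, Y (σ ω) ω ∂P = ∫ i, (∫ ω, Y i ω ∂P) ∂P.map σ := by
  classical
  have hsel : ∀ i, AEStronglyMeasurable (fun ω => if σ ω = i then (1 : ℝ) else 0) P := fun i =>
    ((measurable_of_countable fun j => if j = i then (1 : ℝ) else 0).comp_aemeasurable
      hσ).aestronglyMeasurable
  have hint : ∀ i, Integrable (fun ω => (if σ ω = i then (1 : ℝ) else 0) * Y i ω) P := fun i =>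
    (hY i).bdd_mul (c := 1) (hsel i) (.of_forall fun ω => by split_ifs <;> simp)
  have hterm : ∀ i, ∫ ω, (if σ ω = i then (1 : ℝ) else 0) * Y i ω ∂P
      = (P.map σ).real {i} * ∫ ω, Y i ω ∂P := fun i =>
    ((hind.comp (measurable_of_countable fun j => if j = i then (1 : ℝ) else 0)
      (measurable_pi_apply i)).integral_fun_mul_eq_mul_integral (hsel i)
      (hY i).aestronglyMeasurable).trans
      (congrArg (· * _) (integral_ite_eq_measureReal_map hσ i))
  calc ∫ ω, Y (σ ω) ω ∂P
      = ∫ ω, ∑ i, (if σ ω = i then (1 : ℝ) else 0) * Y i ω ∂P := by simp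
    _ = ∑ i, (P.map σ).real {i} * ∫ ω, Y i ω ∂P := by
      rw [integral_finsetSum _ fun i _ => hint i]
      exact Finset.sum_congr rfl fun i _ => hterm i
    _ = ∫ i, (∫ ω, Y i ω ∂P) ∂P.map σ := (integral_fintype .of_finite).symm

end RandomIndex

theorem double_estimator_underestimates_general
    {Ω : Type*} [MeasurableSpace Ω] (P : Measure Ω) [IsProbabilityMeasure P]
    {M : ℕ} [NeZero M] (QA QB : Fin M → Ω → ℝ) (μ : Fin M → ℝ)
    (hintA : ∀ i, Integrable (QA i) P) (hintB : ∀ i, Integrable (QB i) P)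
    (hmeanB : ∀ i, ∫ ω, QB i ω ∂P = μ i)
    (hindep : IndepFun (fun ω i => QA i ω) (fun ω i => QB i ω) P)
    (g : (Fin M → ℝ) → Fin M) (hg : Measurable g) :
    ∫ ω, QB (g fun j => QA j ω) ω ∂P ≤ Finset.univ.sup' Finset.univ_nonempty μ := by
  have hσ : AEMeasurable (fun ω => g fun j => QA j ω) P :=
    hg.comp_aemeasurable (aemeasurable_pi_lambda _ fun j => (hintA j).aemeasurable)
  have := Measure.isProbabilityMeasure_map hσ
  rw [integral_apply_indepFun_index hσ hintB (hindep.comp hg measurable_id)]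
  simp_rw [hmeanB]
  exact integral_le_sup' _ μ

/-- The double estimator is negatively biased: if the collection `QB` is
independent of the collection `QA`, both collections are integrable and
unbiased for the values `μ i`, and `a*` is a measurably chosen index maximizing
`QA` (i.e. a measurable function of the `QA` collection that attains its max),
then `E[QB(a*)] ≤ max_i μ i`. -/
theorem double_estimator_underestimates
    {Ω : Type*} [MeasurableSpace Ω] (P : Measure Ω) [IsProbabilityMeasure P]
    {M : ℕ} [NeZero M] (QA QB : Fin M → Ω → ℝ) (μ : Fin M → ℝ)
    (hintA : ∀ i, Integrable (QA i) P) (hintB : ∀ i, Integrable (QB i) P)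
    (hmeanA : ∀ i, ∫ ω, QA i ω ∂P = μ i) (hmeanB : ∀ i, ∫ ω, QB i ω ∂P = μ i)
    (hindep : IndepFun (fun ω i => QA i ω) (fun ω i => QB i ω) P)
    (g : (Fin M → ℝ) → Fin M) (hg : Measurable g)
    (hargmax : ∀ ω i, QA i ω ≤ QA (g fun j => QA j ω) ω)
    (hintsel : Integrable (fun ω => QB (g fun j => QA j ω) ω) P) :
    ∫ ω, QB (g fun j => QA j ω) ω ∂P ≤ Finset.univ.sup' Finset.univ_nonempty μ :=
  double_estimator_underestimates_general P QA QB μ hintA hintB hmeanB hindep g hg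
end

section
/- Let Q^{B_1}(a_i) and Q^{B_τ}(a_i), i=1,...,M, be two collections of integrable random variables with the collections mutually independent, all unbiased for values μ_i (E[Q^{B_1}(a_i)] = E[Q^{B_τ}(a_i)] = μ_i), and let τ ∈ [0,1). Define Q^{B_0}(a_i) = τ Q^{B_1}(a_i) + (1-τ) Q^{B_τ}(a_i), and let a*_τ be a measurably chosen index maximizing Q^{B_τ}. Then E[Q^{B_1}(a*_τ)] ≤ E[Q^{B_0}(a*_τ)] ≤ E[max_i Q^{B_τ}(a_i)]. -/
open MeasureTheory ProbabilityTheory Finset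

/-!
The argmax index `σ = a*_τ` is a function of `QBt` alone, hence independent of every `QB1 i`.
Splitting along the events `{σ = i}` gives
`E[QB1 σ] = ∑ i, μ i * P(σ = i) ≤ E[QBt σ]`, since each `μ i = E[QBt i] ≤ E[QBt σ]`.
As `QBt σ` is the maximum of the `QBt i`, both inequalities follow, the middle term
being a convex combination of `E[QB1 σ]` and `E[QBt σ]`.
-/

theorem selection_eq_sum_indicator {Ω ι : Type*} [Fintype ι]
    (X : ι → Ω → ℝ) (σ : Ω → ι) (ω : Ω) :
    X (σ ω) ω = ∑ i, (σ ⁻¹' {i}).indicator (X i) ω := by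
  classical
  rw [sum_eq_single_of_mem (σ ω) (mem_univ _) fun i _ hi => ?_]
  · simp
  · exact Set.indicator_of_notMem (fun h => hi h.symm) _

section Selection

variable {Ω ι : Type*} [MeasurableSpace Ω] {P : Measure Ω}
  [MeasurableSpace ι] [MeasurableSingletonClass ι] {X : ι → Ω → ℝ} {σ : Ω → ι}

theorem ProbabilityTheory.IndepFun.setIntegral_preimage_singleton {Y : Ω → ℝ}
    (h : IndepFun Y σ P) (hY : AEMeasurable Y P) (hσ : AEMeasurable σ P) (i : ι) :
    ∫ ω in σ ⁻¹' {i}, Y ω ∂P = (∫ ω, Y ω ∂P) * P.real (σ ⁻¹' {i}) := by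
  have hs := hσ.nullMeasurableSet_preimage (measurableSet_singleton i)
  have hind : Measurable (({i} : Set ι).indicator (1 : ι → ℝ)) :=
    measurable_const.indicator (measurableSet_singleton i)
  have hfactor : (σ ⁻¹' {i}).indicator Y =
      fun ω => id (Y ω) * ({i} : Set ι).indicator 1 (σ ω) := by
    ext ω
    by_cases hω : σ ω = i <;> simp [Set.indicator, hω]
  have hprob :
      ∫ ω, ({i} : Set ι).indicator (1 : ι → ℝ) (σ ω) ∂P = P.real (σ ⁻¹' {i}) := by
    change ∫ ω, (σ ⁻¹' {i}).indicator (fun _ => (1 : ℝ)) ω ∂P = _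
    rw [integral_indicator₀ hs, setIntegral_const, smul_eq_mul, mul_one]
  rw [← integral_indicator₀ hs, hfactor, h.integral_fun_comp_mul_comp hY hσ
    aestronglyMeasurable_id hind.aestronglyMeasurable, hprob]
  rfl

variable [Fintype ι]

theorem integrable_selection (hX : ∀ i, Integrable (X i) P)
    (hσ : AEMeasurable σ P) : Integrable (fun ω => X (σ ω) ω) P := by
  simp_rw [selection_eq_sum_indicator X σ]
  exact integrable_finsetSum _ fun i _ =>
    (hX i).indicator₀ (hσ.nullMeasurableSet_preimage (measurableSet_singleton i))

theorem integral_selection_eq_sum_setIntegral (hX : ∀ i, Integrable (X i) P)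
    (hσ : AEMeasurable σ P) :
    ∫ ω, X (σ ω) ω ∂P = ∑ i, ∫ ω in σ ⁻¹' {i}, X i ω ∂P := by
  have hs i := hσ.nullMeasurableSet_preimage (measurableSet_singleton i)
  simp_rw [selection_eq_sum_indicator X σ]
  rw [integral_finsetSum _ fun i _ => (hX i).indicator₀ (hs i)]
  exact sum_congr rfl fun i _ => integral_indicator₀ (hs i)

theorem integral_selection_le_of_indepFun [IsProbabilityMeasure P] {c : ℝ}
    (hX : ∀ i, Integrable (X i) P) (hσ : AEMeasurable σ P)
    (hindep : ∀ i, IndepFun (X i) σ P) (hc : ∀ i, ∫ ω, X i ω ∂P ≤ c) :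
    ∫ ω, X (σ ω) ω ∂P ≤ c :=
  calc ∫ ω, X (σ ω) ω ∂P
      = ∑ i, (∫ ω, X i ω ∂P) * P.real (σ ⁻¹' {i}) := by
        rw [integral_selection_eq_sum_setIntegral hX hσ]
        exact sum_congr rfl fun i _ =>
          (hindep i).setIntegral_preimage_singleton (hX i).aemeasurable hσ i
    _ ≤ ∑ i, c * P.real (σ ⁻¹' {i}) :=
        sum_le_sum fun i _ => mul_le_mul_of_nonneg_right (hc i) measureReal_nonneg
    _ = ∫ _, c ∂P := by
        rw [integral_selection_eq_sum_setIntegral (X := fun _ _ => c)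
          (fun _ => integrable_const c) hσ]
        simp [mul_comm]
    _ = c := by simp

end Selection

theorem self_correcting_estimator_sandwich_general
    {Ω : Type*} [MeasurableSpace Ω] (P : Measure Ω) [IsProbabilityMeasure P]
    {M : ℕ} [NeZero M] (QB1 QBt : Fin M → Ω → ℝ) (μ : Fin M → ℝ) (τ : ℝ)
    (hτ : τ ∈ Set.Ico (0 : ℝ) 1)
    (hint1 : ∀ i, Integrable (QB1 i) P) (hintt : ∀ i, Integrable (QBt i) P)
    (hmean1 : ∀ i, ∫ ω, QB1 i ω ∂P = μ i) (hmeant : ∀ i, ∫ ω, QBt i ω ∂P = μ i)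
    (hindep : IndepFun (fun ω i => QB1 i ω) (fun ω i => QBt i ω) P)
    (g : (Fin M → ℝ) → Fin M) (hg : Measurable g)
    (hargmax : ∀ ω i, QBt i ω ≤ QBt (g fun j => QBt j ω) ω) :
    (∫ ω, QB1 (g fun j => QBt j ω) ω ∂P
        ≤ ∫ ω, (τ * QB1 (g fun j => QBt j ω) ω
            + (1 - τ) * QBt (g fun j => QBt j ω) ω) ∂P) ∧
    (∫ ω, (τ * QB1 (g fun j => QBt j ω) ω
        + (1 - τ) * QBt (g fun j => QBt j ω) ω) ∂P
      ≤ ∫ ω, Finset.univ.sup' Finset.univ_nonempty (fun i => QBt i ω) ∂P) := by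
  obtain ⟨hτ0, hτ1⟩ := hτ
  set σ : Ω → Fin M := fun ω => g fun j => QBt j ω
  have hσ : AEMeasurable σ P :=
    hg.comp_aemeasurable (aemeasurable_pi_lambda _ fun j => (hintt j).aemeasurable)
  have hsel1 := integrable_selection hint1 hσ
  have hselt := integrable_selection hintt hσ
  have hdouble_le_single : ∫ ω, QB1 (σ ω) ω ∂P ≤ ∫ ω, QBt (σ ω) ω ∂P :=
    integral_selection_le_of_indepFun hint1 hσ (fun i => hindep.comp (measurable_pi_apply i) hg)
      fun i => hmean1 i ▸ hmeant i ▸ integral_mono (hintt i) hselt fun ω => hargmax ω i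
  have hmax : ∀ ω, univ.sup' univ_nonempty (fun i => QBt i ω) = QBt (σ ω) ω := fun ω =>
    le_antisymm (sup'_le _ _ fun i _ => hargmax ω i) (le_sup' (fun i => QBt i ω) (mem_univ _))
  rw [integral_add (hsel1.const_mul τ) (hselt.const_mul (1 - τ)), integral_const_mul,
    integral_const_mul]
  simp only [hmax]
  constructor <;> nlinarith

/-- Sandwich property of the self-correcting estimator: with `QB1` and `QBτ`
two mutually independent, integrable, unbiased collections for the values
`μ i`, `τ ∈ [0,1)`, `QB0 i = τ QB1 i + (1-τ) QBτ i` and `a*_τ` a measurably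
chosen index maximizing `QBτ`, we have
`E[QB1(a*_τ)] ≤ E[QB0(a*_τ)] ≤ E[max_i QBτ(a_i)]`. -/
theorem self_correcting_estimator_sandwich
    {Ω : Type*} [MeasurableSpace Ω] (P : Measure Ω) [IsProbabilityMeasure P]
    {M : ℕ} [NeZero M] (QB1 QBt : Fin M → Ω → ℝ) (μ : Fin M → ℝ) (τ : ℝ)
    (hτ : τ ∈ Set.Ico (0 : ℝ) 1)
    (hint1 : ∀ i, Integrable (QB1 i) P) (hintt : ∀ i, Integrable (QBt i) P)
    (hmean1 : ∀ i, ∫ ω, QB1 i ω ∂P = μ i) (hmeant : ∀ i, ∫ ω, QBt i ω ∂P = μ i)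
    (hindep : IndepFun (fun ω i => QB1 i ω) (fun ω i => QBt i ω) P)
    (g : (Fin M → ℝ) → Fin M) (hg : Measurable g)
    (hargmax : ∀ ω i, QBt i ω ≤ QBt (g fun j => QBt j ω) ω)
    (hintsel1 : Integrable (fun ω => QB1 (g fun j => QBt j ω) ω) P)
    (hintselt : Integrable (fun ω => QBt (g fun j => QBt j ω) ω) P) :
    (∫ ω, QB1 (g fun j => QBt j ω) ω ∂P
        ≤ ∫ ω, (τ * QB1 (g fun j => QBt j ω) ω
            + (1 - τ) * QBt (g fun j => QBt j ω) ω) ∂P) ∧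
    (∫ ω, (τ * QB1 (g fun j => QBt j ω) ω
        + (1 - τ) * QBt (g fun j => QBt j ω) ω) ∂P
      ≤ ∫ ω, Finset.univ.sup' Finset.univ_nonempty (fun i => QBt i ω) ∂P) :=
  self_correcting_estimator_sandwich_general P QB1 QBt μ τ hτ hint1 hintt hmean1 hmeant hindep g hg
    hargmax
end

section
/- Let S, A be finite sets, γ ∈ [0,1), P a transition kernel, R a reward function, Q* the fixed point of the Bellman operator. For functions Q_n, Q_{n-1} : S×A → ℝ and β ≥ 1, set Q_n^β = Q_n − β(Q_n − Q_{n-1}), let â_β(s') maximize Q_n^β(s', ·), and define for each (s,a): E_n(s,a) = Σ_{s'} P(s'|s,a) [R(s,a) + γ Q_n(s', â_β(s')) − Q*(s,a)]. Then max_{s,a} |E_n(s,a)| ≤ γ max_{s',a'} |Q_n^β(s',a') − Q*(s',a')| + γβ max_{s',a'} |Q_n(s',a') − Q_{n-1}(s',a')|. -/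
/-!
By the Bellman equation for `Q*`, `E_n(s,a) = γ Σ_{s'} P(s'|s,a) (Q_n(s', â) − max Q*(s', ·))`.
At the maximiser `â` of `Q_n^β`, `Q_n(s', â)` equals `max Q_n^β(s', ·)` plus the correction
`β (Q_n − Q_{n−1})(s', â)`, and `max` is 1-Lipschitz for the sup distance; averaging against the
probability weights `P(·|s,a)` preserves the resulting bound.
-/

open Finset

namespace Finset

variable {ι α : Type*} [AddCommGroup α] [LinearOrder α] [IsOrderedAddMonoid α]

theorem sup'_le_sup'_add_sup'_abs_sub {s : Finset ι} (H : s.Nonempty) (f g : ι → α) :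
    s.sup' H f ≤ s.sup' H g + s.sup' H fun i => |f i - g i| :=
  sup'_le H f fun i hi =>
    (sub_le_iff_le_add'.mp (le_abs_self (f i - g i))).trans
      (add_le_add (le_sup' g hi) (le_sup' (fun i => |f i - g i|) hi))

theorem abs_sup'_sub_sup'_le {s : Finset ι} (H : s.Nonempty) (f g : ι → α) :
    |s.sup' H f - s.sup' H g| ≤ s.sup' H fun i => |f i - g i| := by
  refine abs_sub_le_iff.mpr ⟨sub_le_iff_le_add'.mpr (sup'_le_sup'_add_sup'_abs_sub H f g), ?_⟩
  simpa only [abs_sub_comm (g _), sub_le_iff_le_add'] using sup'_le_sup'_add_sup'_abs_sub H g f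

theorem abs_sum_mul_le_of_abs_le {R : Type*} [CommRing R] [LinearOrder R] [IsStrictOrderedRing R]
    {s : Finset ι} {w x : ι → R} {M : R} (hw0 : ∀ i ∈ s, 0 ≤ w i) (hw1 : ∑ i ∈ s, w i = 1)
    (hx : ∀ i ∈ s, |x i| ≤ M) :
    |∑ i ∈ s, w i * x i| ≤ M :=
  calc |∑ i ∈ s, w i * x i| ≤ ∑ i ∈ s, w i * |x i| :=
        (abs_sum_le_sum_abs _ _).trans_eq
          (sum_congr rfl fun i hi => by rw [abs_mul, abs_of_nonneg (hw0 i hi)])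
    _ ≤ ∑ i ∈ s, w i * M := sum_le_sum fun i hi => mul_le_mul_of_nonneg_left (hx i hi) (hw0 i hi)
    _ = M := by rw [← sum_mul, hw1, one_mul]

end Finset

theorem sum_mul_bellman_error_eq {ι R : Type*} [CommRing R] {s : Finset ι} {p x y : ι → R}
    {r γ q : R} (hp : ∑ i ∈ s, p i = 1) (hq : q = r + γ * ∑ i ∈ s, p i * y i) :
    ∑ i ∈ s, p i * (r + γ * x i - q) = γ * ∑ i ∈ s, p i * (x i - y i) := by
  have hsplit : ∀ i, p i * (r + γ * x i - q) = (r - q) * p i + γ * (p i * x i) := fun i => by ring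
  rw [sum_congr rfl fun i _ => hsplit i, sum_add_distrib, ← mul_sum, ← mul_sum, hp, hq]
  simp only [mul_sub, sum_sub_distrib]
  ring

theorem abs_sub_sup'_le_of_self_correction {A : Type*} {s : Finset A} (H : s.Nonempty)
    {qn qprev qβ q : A → ℝ} {β : ℝ} {â : A} (hβ : 0 ≤ β)
    (hqβ : qβ â = qn â - β * (qn â - qprev â)) (hâ : â ∈ s) (hmax : ∀ a ∈ s, qβ a ≤ qβ â) :
    |qn â - s.sup' H q| ≤ (s.sup' H fun a => |qβ a - q a|) + β * |qn â - qprev â| := by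
  have hsup : s.sup' H qβ = qβ â := le_antisymm (sup'_le H qβ hmax) (le_sup' qβ hâ)
  calc |qn â - s.sup' H q|
        = |(s.sup' H qβ - s.sup' H q) + β * (qn â - qprev â)| := by rw [hsup, hqβ]; ring_nf
    _ ≤ |s.sup' H qβ - s.sup' H q| + |β * (qn â - qprev â)| := abs_add_le _ _
    _ ≤ (s.sup' H fun a => |qβ a - q a|) + β * |qn â - qprev â| := by
        rw [abs_mul, abs_of_nonneg hβ]
        exact add_le_add_left (abs_sup'_sub_sup'_le H qβ q) _

/-- Key bound (Eqn (Fmax)) in the convergence proof of Self-correcting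
Q-learning: with `Q* ` the Bellman fixed point, `Q_n^β = Q_n − β(Q_n − Q_{n−1})`,
`â_β(s')` maximizing `Q_n^β(s',·)`, and
`E_n(s,a) = Σ_{s'} P(s'|s,a)(R(s,a) + γ Q_n(s', â_β(s')) − Q*(s,a))`, one has
`max_{s,a}|E_n(s,a)| ≤ γ max|Q_n^β − Q*| + γβ max|Q_n − Q_{n−1}|`. -/
theorem self_correcting_expected_update_bound
    {S A : Type*} [Fintype S] [Nonempty S] [Fintype A] [Nonempty A]
    (γ : ℝ) (hγ : γ ∈ Set.Ico (0 : ℝ) 1)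
    (P : S → A → S → ℝ) (hP0 : ∀ s a s', 0 ≤ P s a s')
    (hP1 : ∀ s a, ∑ s', P s a s' = 1)
    (R : S → A → ℝ)
    (Qstar : S → A → ℝ)
    (hQstar : ∀ s a, Qstar s a
      = R s a + γ * ∑ s', P s a s'
          * (Finset.univ.sup' Finset.univ_nonempty fun a' => Qstar s' a'))
    (Qn Qnm1 : S → A → ℝ) (β : ℝ) (hβ : 1 ≤ β)
    (Qβ : S → A → ℝ)
    (hQβ : ∀ s a, Qβ s a = Qn s a - β * (Qn s a - Qnm1 s a))
    (ahat : S → A) (hahat : ∀ s' a, Qβ s' a ≤ Qβ s' (ahat s'))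
    (En : S → A → ℝ)
    (hEn : ∀ s a, En s a
      = ∑ s', P s a s' * (R s a + γ * Qn s' (ahat s') - Qstar s a)) :
    (Finset.univ.sup' Finset.univ_nonempty fun p : S × A => |En p.1 p.2|)
      ≤ γ * (Finset.univ.sup' Finset.univ_nonempty
              fun p : S × A => |Qβ p.1 p.2 - Qstar p.1 p.2|)
        + γ * β * (Finset.univ.sup' Finset.univ_nonempty
              fun p : S × A => |Qn p.1 p.2 - Qnm1 p.1 p.2|) := by
  set dβ := fun p : S × A => |Qβ p.1 p.2 - Qstar p.1 p.2|
  set dn := fun p : S × A => |Qn p.1 p.2 - Qnm1 p.1 p.2|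
  have hβ0 : 0 ≤ β := zero_le_one.trans hβ
  have hstate : ∀ s', |Qn s' (ahat s') - univ.sup' univ_nonempty (Qstar s')|
      ≤ univ.sup' univ_nonempty dβ + β * univ.sup' univ_nonempty dn := fun s' =>
    (abs_sub_sup'_le_of_self_correction univ_nonempty hβ0 (hQβ s' _) (mem_univ _)
      fun a _ => hahat s' a).trans <|
      add_le_add (sup'_le _ _ fun a _ => le_sup' dβ (mem_univ (s', a)))
        (mul_le_mul_of_nonneg_left (le_sup' dn (mem_univ (s', ahat s'))) hβ0)
  refine sup'_le _ _ fun ⟨s, a⟩ _ => ?_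
  rw [hEn, sum_mul_bellman_error_eq (hP1 s a) (hQstar s a), abs_mul, abs_of_nonneg hγ.1,
    mul_assoc, ← mul_add]
  exact mul_le_mul_of_nonneg_left
    (abs_sum_mul_le_of_abs_le (fun s' _ => hP0 s a s') (hP1 s a) fun s' _ => hstate s') hγ.1
end
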